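/- A strategy profile in the no-limit clairvoyance game is a Nash equilibrium if and only if player 1 bets n with probability 1 with a winning hand and with probability n/(1+n) with a losing hand, and for every x ∈ (0,n] player 2's probability of calling a bet of size x lies in the interval [1/(1+x), min{n/(x(1+n)), 1}]. -/

import Mathlib

/-!  A concrete model of the no-limit clairvoyance game with integer bet sizes.
Player 1 is dealt a winning hand (`true`) or losing hand (`false`) with probability
1/2 each, bets an integer `x ∈ {0,…,n}` (0 = check), and player 2 calls or folds.
A strategy for player 1 assigns to each hand a probability distribution over bet
sizes; a strategy for player 2 assigns to each bet size a calling probability. -/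

/-- `s` is a valid strategy for player 1 in the clairvoyance game with stack `n`. -/
def IsStrat1 (n : ℕ) (s : Bool → ℕ → ℝ) : Prop :=
  (∀ h x, 0 ≤ s h x) ∧ (∀ h : Bool, ∑ x ∈ Finset.range (n + 1), s h x = 1)

/-- `s` is a valid strategy for player 2 (a calling probability for each bet size). -/
def IsStrat2 (n : ℕ) (s : ℕ → ℝ) : Prop :=
  ∀ x, 0 ≤ s x ∧ s x ≤ 1

/-- Player 1's payoff with hand `h` after betting `x`, when player 2 calls a bet of
size `x` with probability `s2 x`: a check yields ±0.5, a called bet of `x` yields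
±(0.5 + x), and a fold yields +0.5. -/
noncomputable def pay (s2 : ℕ → ℝ) (h : Bool) (x : ℕ) : ℝ :=
  if x = 0 then (if h then 0.5 else -0.5)
  else s2 x * (if h then (0.5 + (x : ℝ)) else -(0.5 + (x : ℝ))) + (1 - s2 x) * 0.5

/-- Player 1's expected payoff (hands equiprobable); the game is zero-sum. -/
noncomputable def u1 (n : ℕ) (s1 : Bool → ℕ → ℝ) (s2 : ℕ → ℝ) : ℝ :=
  (1/2) * ∑ x ∈ Finset.range (n + 1), s1 true x * pay s2 true x
    + (1/2) * ∑ x ∈ Finset.range (n + 1), s1 false x * pay s2 false x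

/-- `(s1, s2)` is a Nash equilibrium of the (zero-sum) clairvoyance game:
no unilateral profitable deviation. -/
def IsNash (n : ℕ) (s1 : Bool → ℕ → ℝ) (s2 : ℕ → ℝ) : Prop :=
  IsStrat1 n s1 ∧ IsStrat2 n s2 ∧
  (∀ s1', IsStrat1 n s1' → u1 n s1' s2 ≤ u1 n s1 s2) ∧
  (∀ s2', IsStrat2 n s2' → u1 n s1 s2 ≤ u1 n s1 s2')

/-! The game is zero-sum with value `n / (2 (1 + n))`, so a profile is a Nash equilibrium
exactly when each strategy secures this value on its own. Player 2 secures it iff no pure bet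
earns a winning hand more than `1/2 + n/(1+n)` or a losing hand more than `-1/2`, which is the
interval condition on the calling probabilities. Player 1 secures it iff she best-responds to
the two extreme optimal calling strategies `1/(1+x)` and `n/(x(1+n))` (the first forces a winning
hand to bet `n`, the second forces a losing hand to check or bet `n`) while leaving player 2
indifferent at `n`, which fixes the bluffing frequency `n/(1+n)`. -/

theorem isSaddle_iff_secures {α β : Type*} {S : Set α} {T : Set β} {u : α → β → ℝ}
    {v : ℝ} {a₀ : α} {b₀ : β} (ha₀ : a₀ ∈ S) (hb₀ : b₀ ∈ T)
    (hva₀ : ∀ b ∈ T, v ≤ u a₀ b) (hvb₀ : ∀ a ∈ S, u a b₀ ≤ v)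
    {a : α} {b : β} (ha : a ∈ S) (hb : b ∈ T) :
    ((∀ a' ∈ S, u a' b ≤ u a b) ∧ ∀ b' ∈ T, u a b ≤ u a b') ↔
      (∀ b' ∈ T, v ≤ u a b') ∧ ∀ a' ∈ S, u a' b ≤ v := by
  constructor
  · rintro ⟨hbest_a, hbest_b⟩
    exact ⟨fun b' hb' => ((hva₀ b hb).trans (hbest_a a₀ ha₀)).trans (hbest_b b' hb'),
      fun a' ha' => ((hbest_a a' ha').trans (hbest_b b₀ hb₀)).trans (hvb₀ a ha)⟩
  · rintro ⟨hsec_a, hsec_b⟩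
    exact ⟨fun a' ha' => (hsec_b a' ha').trans (hsec_a b hb),
      fun b' hb' => (hsec_b a ha).trans (hsec_a b' hb')⟩

namespace Finset

variable {ι : Type*} {s : Finset ι} {p f : ι → ℝ} {M : ℝ}

theorem sum_mul_le_of_le (hp : ∀ i ∈ s, 0 ≤ p i) (hp1 : ∑ i ∈ s, p i = 1)
    (hf : ∀ i ∈ s, f i ≤ M) : ∑ i ∈ s, p i * f i ≤ M :=
  calc ∑ i ∈ s, p i * f i ≤ ∑ i ∈ s, p i * M :=
        sum_le_sum fun i hi => mul_le_mul_of_nonneg_left (hf i hi) (hp i hi)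
    _ = M := by rw [← sum_mul, hp1, one_mul]

theorem eq_zero_of_lt_of_le_sum_mul (hp : ∀ i ∈ s, 0 ≤ p i) (hp1 : ∑ i ∈ s, p i = 1)
    (hf : ∀ i ∈ s, f i ≤ M) (hM : M ≤ ∑ i ∈ s, p i * f i) {i : ι} (hi : i ∈ s)
    (hlt : f i < M) : p i = 0 := by
  have hgap : ∑ j ∈ s, p j * (M - f j) = 0 := by
    have hle : ∑ j ∈ s, p j * (M - f j) ≤ 0 := by
      simp only [mul_sub, sum_sub_distrib, ← sum_mul, hp1, one_mul]
      linarith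
    exact le_antisymm hle (sum_nonneg fun j hj => mul_nonneg (hp j hj) (by linarith [hf j hj]))
  have hpi := (sum_eq_zero_iff_of_nonneg fun j hj =>
    mul_nonneg (hp j hj) (by linarith [hf j hj])).1 hgap i hi
  exact (mul_eq_zero.1 hpi).resolve_right (by linarith)

theorem eq_zero_of_sum_le_sum_of_subset [DecidableEq ι] {t : Finset ι} (ht : t ⊆ s)
    (hp : ∀ i ∈ s, 0 ≤ p i) (hsum : ∑ i ∈ s, p i ≤ ∑ i ∈ t, p i) {i : ι} (hi : i ∈ s)
    (hit : i ∉ t) : p i = 0 := by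
  have hrest : ∑ j ∈ s \ t, p j = 0 := by
    have := sum_sdiff (f := p) ht
    exact le_antisymm (by linarith) (sum_nonneg fun j hj => hp j (mem_sdiff.1 hj).1)
  exact (sum_eq_zero_iff_of_nonneg fun j hj => hp j (mem_sdiff.1 hj).1).1 hrest i
    (mem_sdiff.2 ⟨hi, hit⟩)

theorem sum_range_succ_eq_zero_add_self {β : Type*} [AddCommMonoid β] {n : ℕ} (hn : n ≠ 0)
    {g : ℕ → β} (hg : ∀ x ≤ n, x ≠ 0 → x ≠ n → g x = 0) :
    ∑ x ∈ range (n + 1), g x = g 0 + g n := by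
  rw [← sum_pair hn.symm]
  refine (sum_subset (by simp [insert_subset_iff]) fun x hx hx' => ?_).symm
  simp only [mem_insert, mem_singleton, not_or] at hx'
  exact hg x (mem_range_succ_iff.1 hx) hx'.1 hx'.2

end Finset

namespace Clairvoyance

variable {n : ℕ} {s1 : Bool → ℕ → ℝ} {s2 : ℕ → ℝ}

theorem pay_true_zero (s2 : ℕ → ℝ) : pay s2 true 0 = 1 / 2 := by norm_num [pay]

theorem pay_false_zero (s2 : ℕ → ℝ) : pay s2 false 0 = -1 / 2 := by norm_num [pay]

theorem pay_true_of_ne_zero (s2 : ℕ → ℝ) {x : ℕ} (hx : x ≠ 0) :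
    pay s2 true x = 1 / 2 + s2 x * x := by
  simp only [pay, hx, if_false, if_true]; ring

theorem pay_false_of_ne_zero (s2 : ℕ → ℝ) {x : ℕ} (hx : x ≠ 0) :
    pay s2 false x = 1 / 2 - s2 x * (1 + x) := by
  simp only [pay, hx, if_false, Bool.false_eq_true]; ring

theorem u1_le_of_pay_le {M : Bool → ℝ} (hs1 : IsStrat1 n s1)
    (hM : ∀ h x, x ≤ n → pay s2 h x ≤ M h) : u1 n s1 s2 ≤ (M true + M false) / 2 := by
  have hE : ∀ h, ∑ x ∈ Finset.range (n + 1), s1 h x * pay s2 h x ≤ M h := fun h =>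
    Finset.sum_mul_le_of_le (fun x _ => hs1.1 h x) (hs1.2 h)
      fun x hx => hM h x (Finset.mem_range_succ_iff.1 hx)
  rw [u1]
  linarith [hE true, hE false]

def pureStrat1 (y z : ℕ) : Bool → ℕ → ℝ := fun h x => if x = cond h y z then 1 else 0

theorem isStrat1_pureStrat1 {y z : ℕ} (hy : y ≤ n) (hz : z ≤ n) :
    IsStrat1 n (pureStrat1 y z) := by
  refine ⟨fun h x => by unfold pureStrat1; split_ifs <;> norm_num, fun h => ?_⟩
  cases h <;> simp [pureStrat1, Finset.sum_ite_eq', hy, hz]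

theorem u1_pureStrat1 {y z : ℕ} (hy : y ≤ n) (hz : z ≤ n) (s2 : ℕ → ℝ) :
    u1 n (pureStrat1 y z) s2 = (pay s2 true y + pay s2 false z) / 2 := by
  simp only [u1, pureStrat1, cond_true, cond_false, ite_mul, one_mul, zero_mul,
    Finset.sum_ite_eq', Finset.mem_range, Order.lt_add_one_iff, hy, hz, if_true]
  ring

noncomputable def handValue (n : ℕ) : Bool → ℝ
  | true => 1 / 2 + n / (1 + n)
  | false => -1 / 2

noncomputable def value (n : ℕ) : ℝ := (handValue n true + handValue n false) / 2

def Secures1 (n : ℕ) (v : ℝ) (s1 : Bool → ℕ → ℝ) : Prop :=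
  ∀ s2, IsStrat2 n s2 → v ≤ u1 n s1 s2

def Secures2 (n : ℕ) (v : ℝ) (s2 : ℕ → ℝ) : Prop :=
  ∀ s1, IsStrat1 n s1 → u1 n s1 s2 ≤ v

theorem value_eq (n : ℕ) : 2 * value n = n / (1 + n) := by
  simp only [value, handValue]; ring

theorem pay_zero_le_handValue (s2 : ℕ → ℝ) (h : Bool) : pay s2 h 0 ≤ handValue n h := by
  cases h
  · simp [pay_false_zero, handValue]
  · simp only [pay_true_zero, handValue]; linarith [show (0 : ℝ) ≤ n / (1 + n) by positivity]

theorem pay_true_le_handValue_iff {x : ℕ} (hx : x ≠ 0) :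
    pay s2 true x ≤ handValue n true ↔ s2 x ≤ n / (x * (1 + n)) := by
  have hxpos : (0 : ℝ) < x := by positivity
  rw [pay_true_of_ne_zero s2 hx, handValue, add_le_add_iff_left, le_div_iff₀ (by positivity),
    le_div_iff₀ (by positivity), mul_assoc]

theorem pay_false_le_handValue_iff {x : ℕ} (hx : x ≠ 0) :
    pay s2 false x ≤ handValue n false ↔ 1 / (1 + x) ≤ s2 x := by
  rw [pay_false_of_ne_zero s2 hx, handValue, div_le_iff₀ (by positivity)]
  constructor <;> intro h <;> linarith

theorem pay_false_lt_handValue_iff {x : ℕ} (hx : x ≠ 0) :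
    pay s2 false x < handValue n false ↔ 1 / (1 + x) < s2 x := by
  rw [pay_false_of_ne_zero s2 hx, handValue, div_lt_iff₀ (by positivity)]
  constructor <;> intro h <;> linarith

theorem forall_pay_le_handValue_iff (hs2 : IsStrat2 n s2) :
    (∀ h x, x ≤ n → pay s2 h x ≤ handValue n h) ↔
      ∀ x : ℕ, 1 ≤ x → x ≤ n →
        1 / (1 + (x : ℝ)) ≤ s2 x ∧ s2 x ≤ min ((n : ℝ) / (x * (1 + n))) 1 := by
  constructor
  · intro hpay x hx1 hxn
    have hx : x ≠ 0 := Nat.one_le_iff_ne_zero.1 hx1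
    exact ⟨(pay_false_le_handValue_iff hx).1 (hpay false x hxn),
      le_min ((pay_true_le_handValue_iff hx).1 (hpay true x hxn)) (hs2 x).2⟩
  · intro hbounds h x hxn
    rcases Nat.eq_zero_or_pos x with rfl | hx1
    · exact pay_zero_le_handValue s2 h
    obtain ⟨hlow, hup⟩ := hbounds x hx1 hxn
    cases h
    · exact (pay_false_le_handValue_iff hx1.ne').2 hlow
    · exact (pay_true_le_handValue_iff hx1.ne').2 (hup.trans (min_le_left _ _))

theorem secures2_of_pay_le (hpay : ∀ h x, x ≤ n → pay s2 h x ≤ handValue n h) :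
    Secures2 n (value n) s2 :=
  fun _ hs1 => u1_le_of_pay_le hs1 hpay

theorem pay_le_of_secures2 (hn : n ≠ 0) (hsec : Secures2 n (value n) s2) :
    ∀ h x, x ≤ n → pay s2 h x ≤ handValue n h := by
  have hpure : ∀ y z, y ≤ n → z ≤ n → pay s2 true y + pay s2 false z ≤ n / (1 + n) := by
    intro y z hy hz
    have := hsec _ (isStrat1_pureStrat1 hy hz)
    rw [u1_pureStrat1 hy hz] at this
    linarith [value_eq n]
  intro h x hx
  cases h
  · -- the profile (bet `n`, bet `n`) forces `s2 n ≥ 1 / (1 + n)`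
    have hcall : n / (1 + n) ≤ s2 n * n := by
      have := hpure n n le_rfl le_rfl
      rw [pay_true_of_ne_zero s2 hn, pay_false_of_ne_zero s2 hn] at this
      have hq : (n : ℝ) / (1 + n) = 1 - 1 / (1 + n) := by field_simp; ring
      calc (n : ℝ) / (1 + n) = 1 / (1 + n) * n := by ring
        _ ≤ s2 n * n := mul_le_mul_of_nonneg_right (by linarith) (Nat.cast_nonneg n)
    have := hpure n x le_rfl hx
    rw [pay_true_of_ne_zero s2 hn] at this
    simp only [handValue]
    linarith
  · have := hpure x 0 hx (Nat.zero_le n)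
    rw [pay_false_zero] at this
    simp only [handValue]
    linarith

theorem secures2_iff (hn : n ≠ 0) (hs2 : IsStrat2 n s2) :
    Secures2 n (value n) s2 ↔
      ∀ x : ℕ, 1 ≤ x → x ≤ n →
        1 / (1 + (x : ℝ)) ≤ s2 x ∧ s2 x ≤ min ((n : ℝ) / (x * (1 + n))) 1 :=
  ⟨fun hsec => (forall_pay_le_handValue_iff hs2).1 (pay_le_of_secures2 hn hsec),
    fun hb => secures2_of_pay_le ((forall_pay_le_handValue_iff hs2).2 hb)⟩

theorem isStrat2_const {t : ℝ} (h0 : 0 ≤ t) (h1 : t ≤ 1) : IsStrat2 n fun _ => t :=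
  fun _ => ⟨h0, h1⟩

noncomputable def minCall : ℕ → ℝ := fun x => 1 / (1 + x)

-- At `x = 0` this is `n / 0 = 0`, so it is a valid calling strategy.
noncomputable def maxCall (n : ℕ) : ℕ → ℝ := fun x => n / (x * (1 + n))

theorem strictMono_div_one_add : StrictMono fun x : ℕ => (x : ℝ) / (1 + x) := by
  intro a b hab
  have hab' : (a : ℝ) < b := by exact_mod_cast hab
  simp only
  rw [div_lt_div_iff₀ (by positivity) (by positivity)]
  linarith

theorem minCall_eq_div {x : ℕ} (hx : x ≠ 0) : minCall x = x / (1 + x) / x := by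
  have : (x : ℝ) ≠ 0 := by exact_mod_cast hx
  simp only [minCall]
  field_simp

theorem maxCall_eq_div (n x : ℕ) : maxCall n x = n / (1 + n) / x := by
  rw [maxCall, mul_comm, div_div]

theorem minCall_le_maxCall_iff {x : ℕ} (hx : x ≠ 0) :
    minCall x ≤ maxCall n x ↔ x ≤ n := by
  rw [minCall_eq_div hx, maxCall_eq_div,
    div_le_div_iff_of_pos_right (Nat.cast_pos.2 (Nat.pos_of_ne_zero hx))]
  exact strictMono_div_one_add.le_iff_le

theorem minCall_lt_maxCall_iff {x : ℕ} (hx : x ≠ 0) :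
    minCall x < maxCall n x ↔ x < n := by
  rw [minCall_eq_div hx, maxCall_eq_div,
    div_lt_div_iff_of_pos_right (Nat.cast_pos.2 (Nat.pos_of_ne_zero hx))]
  exact strictMono_div_one_add.lt_iff_lt

theorem isStrat2_minCall (n : ℕ) : IsStrat2 n minCall := fun x =>
  ⟨by rw [minCall]; positivity, by rw [minCall, div_le_one (by positivity)]; simp⟩

theorem isStrat2_maxCall (n : ℕ) : IsStrat2 n (maxCall n) := by
  intro x
  refine ⟨by rw [maxCall]; positivity, ?_⟩
  rcases Nat.eq_zero_or_pos x with rfl | hx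
  · simp [maxCall]
  · have hx' : (1 : ℝ) ≤ x := by exact_mod_cast hx
    rw [maxCall, div_le_one (by positivity)]
    nlinarith

theorem pay_minCall_true (x : ℕ) : pay minCall true x = 1 / 2 + x / (1 + x) := by
  rcases eq_or_ne x 0 with rfl | hx
  · simp [pay_true_zero]
  · rw [pay_true_of_ne_zero _ hx, minCall]; ring

theorem pay_minCall_le (n : ℕ) : ∀ h x, x ≤ n → pay minCall h x ≤ handValue n h := by
  rintro (_ | _) x hx
  · rcases eq_or_ne x 0 with rfl | hx0
    · exact pay_zero_le_handValue _ _
    · exact (pay_false_le_handValue_iff hx0).2 le_rfl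
  · rw [pay_minCall_true, handValue, add_le_add_iff_left]
    exact strictMono_div_one_add.le_iff_le.2 hx

theorem pay_maxCall_le (n : ℕ) : ∀ h x, x ≤ n → pay (maxCall n) h x ≤ handValue n h := by
  intro h x hx
  rcases eq_or_ne x 0 with rfl | hx0
  · exact pay_zero_le_handValue _ _
  cases h
  · exact (pay_false_le_handValue_iff hx0).2 ((minCall_le_maxCall_iff hx0).2 hx)
  · exact (pay_true_le_handValue_iff hx0).2 le_rfl

theorem secures2_minCall (n : ℕ) : Secures2 n (value n) minCall :=
  secures2_of_pay_le (pay_minCall_le n)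

theorem eq_zero_of_pay_lt {M : Bool → ℝ} (hs1 : IsStrat1 n s1)
    (hsec : Secures1 n ((M true + M false) / 2) s1) (hs2 : IsStrat2 n s2)
    (hpay : ∀ h x, x ≤ n → pay s2 h x ≤ M h) {h : Bool} {x : ℕ} (hx : x ≤ n)
    (hlt : pay s2 h x < M h) : s1 h x = 0 := by
  have hE : ∀ h, ∑ x ∈ Finset.range (n + 1), s1 h x * pay s2 h x ≤ M h := fun h =>
    Finset.sum_mul_le_of_le (fun x _ => hs1.1 h x) (hs1.2 h)
      fun x hx => hpay h x (Finset.mem_range_succ_iff.1 hx)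
  have hu := hsec s2 hs2
  rw [u1] at hu
  have hME : M h ≤ ∑ x ∈ Finset.range (n + 1), s1 h x * pay s2 h x := by
    cases h <;> linarith [hE true, hE false]
  exact Finset.eq_zero_of_lt_of_le_sum_mul (fun x _ => hs1.1 h x) (hs1.2 h)
    (fun x hx => hpay h x (Finset.mem_range_succ_iff.1 hx)) hME
    (Finset.mem_range_succ_iff.2 hx) hlt

theorem sum_mul_of_support (hn : n ≠ 0) {h : Bool}
    (hsupp : ∀ x ≤ n, x ≠ 0 → x ≠ n → s1 h x = 0) (g : ℕ → ℝ) :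
    ∑ x ∈ Finset.range (n + 1), s1 h x * g x = s1 h 0 * g 0 + s1 h n * g n :=
  Finset.sum_range_succ_eq_zero_add_self hn fun x hx hx0 hxn => by
    rw [hsupp x hx hx0 hxn, zero_mul]

theorem add_eq_one_of_support (hn : n ≠ 0) (hs1 : IsStrat1 n s1) {h : Bool}
    (hsupp : ∀ x ≤ n, x ≠ 0 → x ≠ n → s1 h x = 0) : s1 h 0 + s1 h n = 1 :=
  (Finset.sum_range_succ_eq_zero_add_self hn hsupp).symm.trans (hs1.2 h)

theorem two_mul_u1_of_support (hn : n ≠ 0) (hs1 : IsStrat1 n s1)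
    (ha : ∀ x ≤ n, x ≠ n → s1 true x = 0)
    (hb : ∀ x ≤ n, x ≠ 0 → x ≠ n → s1 false x = 0) (s2 : ℕ → ℝ) :
    2 * u1 n s1 s2 = s1 false n + s2 n * (n - s1 false n * (1 + n)) := by
  have ha' : ∀ x ≤ n, x ≠ 0 → x ≠ n → s1 true x = 0 := fun x hx _ hxn => ha x hx hxn
  have ha0 : s1 true 0 = 0 := ha 0 (Nat.zero_le n) hn.symm
  have han := add_eq_one_of_support hn hs1 ha'
  have hb1 := add_eq_one_of_support hn hs1 hb
  rw [ha0, zero_add] at han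
  rw [u1, sum_mul_of_support hn ha', sum_mul_of_support hn hb, pay_true_zero, pay_false_zero,
    pay_true_of_ne_zero s2 hn, pay_false_of_ne_zero s2 hn, ha0, han]
  linear_combination (-1 / 2 : ℝ) * hb1

theorem secures1_iff (hn : n ≠ 0) (hs1 : IsStrat1 n s1) :
    Secures1 n (value n) s1 ↔
      s1 true n = 1 ∧ s1 false n = n / (1 + n) ∧ s1 false 0 = 1 - n / (1 + n) := by
  constructor
  · intro hsec
    have ha : ∀ x ≤ n, x ≠ n → s1 true x = 0 := fun x hx hxn =>
      eq_zero_of_pay_lt hs1 hsec (isStrat2_minCall n) (pay_minCall_le n) hx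
        (by rw [pay_minCall_true, handValue, add_lt_add_iff_left]
            exact strictMono_div_one_add.lt_iff_lt.2 (lt_of_le_of_ne hx hxn))
    have hb : ∀ x ≤ n, x ≠ 0 → x ≠ n → s1 false x = 0 := fun x hx hx0 hxn =>
      eq_zero_of_pay_lt hs1 hsec (isStrat2_maxCall n) (pay_maxCall_le n) hx
        ((pay_false_lt_handValue_iff hx0).2
          ((minCall_lt_maxCall_iff hx0).2 (lt_of_le_of_ne hx hxn)))
    have htest : ∀ t : ℝ, 0 ≤ t → t ≤ 1 →
        n / (1 + n) ≤ s1 false n + t * (n - s1 false n * (1 + n)) := fun t ht0 ht1 => by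
        rw [← value_eq, ← two_mul_u1_of_support hn hs1 ha hb fun _ => t]
        linarith [hsec _ (isStrat2_const ht0 ht1)]
    have hbn : s1 false n = n / (1 + n) := by
      have hnpos : (0 : ℝ) < n := by exact_mod_cast Nat.pos_of_ne_zero hn
      have hfold := htest 0 le_rfl zero_le_one
      have hcall := htest 1 zero_le_one le_rfl
      refine le_antisymm ?_ (by simpa using hfold)
      rw [le_div_iff₀ (by positivity)]
      rw [div_le_iff₀ (by positivity)] at hcall
      nlinarith
    have han := add_eq_one_of_support hn hs1 fun x hx _ hxn => ha x hx hxn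
    rw [ha 0 (Nat.zero_le n) hn.symm, zero_add] at han
    exact ⟨han, hbn, by linarith [add_eq_one_of_support hn hs1 hb]⟩
  · rintro ⟨han, hbn, hb0⟩ s2 _
    have ha : ∀ x ≤ n, x ≠ n → s1 true x = 0 := fun x hx hxn =>
      Finset.eq_zero_of_sum_le_sum_of_subset (t := {n}) (by simp) (fun x _ => hs1.1 true x)
        (by rw [hs1.2 true, Finset.sum_singleton, han]) (Finset.mem_range_succ_iff.2 hx) (by simpa)
    have hb : ∀ x ≤ n, x ≠ 0 → x ≠ n → s1 false x = 0 := fun x hx hx0 hxn =>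
      Finset.eq_zero_of_sum_le_sum_of_subset (t := {0, n}) (by simp [Finset.insert_subset_iff])
        (fun x _ => hs1.1 false x)
        (by rw [hs1.2 false, Finset.sum_pair hn.symm, hb0, hbn]; simp)
        (Finset.mem_range_succ_iff.2 hx) (by simp [hx0, hxn])
    have hu := two_mul_u1_of_support hn hs1 ha hb s2
    rw [hbn, div_mul_cancel₀ _ (by positivity), sub_self, mul_zero, add_zero, ← value_eq] at hu
    linarith

theorem exists_secures1 (hn : n ≠ 0) : ∃ s1, IsStrat1 n s1 ∧ Secures1 n (value n) s1 := by
  set q : ℝ := n / (1 + n) with hq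
  have hq0 : 0 ≤ q := by positivity
  have hq1 : q ≤ 1 := by rw [hq, div_le_one (by positivity)]; linarith
  let s1 : Bool → ℕ → ℝ := fun h x =>
    if x = n then cond h 1 q else if x = 0 then cond h 0 (1 - q) else 0
  have hs1 : IsStrat1 n s1 := by
    refine ⟨fun h x => ?_, fun h => ?_⟩
    · cases h <;> simp only [s1, cond] <;> split_ifs <;> linarith
    · rw [Finset.sum_range_succ_eq_zero_add_self hn fun x _ hx0 hxn => by simp [s1, hx0, hxn]]
      cases h <;> simp [s1, hn.symm]
  exact ⟨s1, hs1,
    (secures1_iff hn hs1).2 ⟨by simp [s1], by simp [s1, hq], by simp [s1, hq, hn.symm]⟩⟩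

end Clairvoyance

/-- A strategy profile of the no-limit clairvoyance game is a Nash equilibrium if and
only if player 1 bets `n` with probability 1 with a winning hand and with probability
`n/(1+n)` with a losing hand (checking otherwise), and for every `x ∈ (0,n]` player 2's
probability of calling a bet of size `x` lies in `[1/(1+x), min {n/(x(1+n)), 1}]`. -/
theorem clairvoyance_nash_characterization (n : ℕ) (hn : 1 ≤ n)
    (s1 : Bool → ℕ → ℝ) (s2 : ℕ → ℝ)
    (h1 : IsStrat1 n s1) (h2 : IsStrat2 n s2) :
    IsNash n s1 s2 ↔
      (s1 true n = 1 ∧ s1 false n = (n : ℝ) / (1 + n) ∧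
        s1 false 0 = 1 - (n : ℝ) / (1 + n) ∧
        ∀ x : ℕ, 1 ≤ x → x ≤ n →
          1 / (1 + (x : ℝ)) ≤ s2 x ∧ s2 x ≤ min ((n : ℝ) / (x * (1 + n))) 1) := by
  have hn0 : n ≠ 0 := Nat.one_le_iff_ne_zero.1 hn
  obtain ⟨s1₀, hs1₀, hsec1₀⟩ := Clairvoyance.exists_secures1 hn0
  have hsaddle := isSaddle_iff_secures (S := {s | IsStrat1 n s}) (T := {s | IsStrat2 n s})
    (u := u1 n) hs1₀ (Clairvoyance.isStrat2_minCall n) hsec1₀ (Clairvoyance.secures2_minCall n)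
    h1 h2
  rw [IsNash, and_iff_right h1, and_iff_right h2]
  refine hsaddle.trans ((and_congr (Clairvoyance.secures1_iff hn0 h1)
    (Clairvoyance.secures2_iff hn0 h2)).trans ?_)
  simp only [and_assoc]
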